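/- Let R be a commutative unital ring, I an ideal of R, and M an I-coreduced R-module. Then the I-adic completion of the submodule IM is zero; that is, Λ_I(IM) = lim_k (IM)/(I^k · IM) = 0. In particular, for M flat and I-coreduced, Λ_I(F_I(M)) = 0. -/

import Mathlib

/-!
If `I²M = IM`, then `I` acts on `IM` with `I · IM = IM`, so every quotient `IM / I^k IM` vanishes
and so does the limit. For flat `M`, each `I^(k+1) ⊗ M` embeds into `M` with image
`I^(k+1) M = IM`, compatibly with the transition maps; hence `F_I(M) ≅ IM` and the first part
applies.
-/

universe u

open TensorProduct

/-- The inverse limit of an inverse system of `R`-modules indexed by `ℕ`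
(with transition maps `f k l h : G l →ₗ[R] G k` for `h : k ≤ l`), realized as the submodule
of compatible families in the product. -/
def invLimit (R : Type u) [CommRing R] (G : ℕ → Type u) [∀ k, AddCommGroup (G k)]
    [∀ k, Module R (G k)] (f : ∀ k l : ℕ, k ≤ l → G l →ₗ[R] G k) :
    Submodule R (∀ k, G k) where
  carrier := { x | ∀ (k l : ℕ) (h : k ≤ l), f k l h (x l) = x k }
  add_mem' := by
    intro a b ha hb k l h
    simp [ha k l h, hb k l h]
  zero_mem' := by
    intro k l h
    simp
  smul_mem' := by
    intro c a ha k l h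
    simp [ha k l h]

/-- The inverse system `k ↦ I^(k+1) ⊗_R M` with transition maps induced by the inclusions
`I^(l+1) ⊆ I^(k+1)` for `k ≤ l`. -/
noncomputable def tensorPowDiagram (R : Type u) [CommRing R] (I : Ideal R) (M : Type u)
    [AddCommGroup M] [Module R M] :
    ∀ k l : ℕ, k ≤ l → (↥(I ^ (l + 1)) ⊗[R] M) →ₗ[R] (↥(I ^ (k + 1)) ⊗[R] M) :=
  fun _ _ h =>
    LinearMap.rTensor M (Submodule.inclusion (Ideal.pow_le_pow_right (by omega)))

/-- `F_I(M) = lim_{k ≥ 1} (I^k ⊗_R M)`, the dual of the ideal transform. -/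
noncomputable abbrev dualTransform (R : Type u) [CommRing R] (I : Ideal R) (M : Type u)
    [AddCommGroup M] [Module R M] : Submodule R (∀ k : ℕ, ↥(I ^ (k + 1)) ⊗[R] M) :=
  invLimit R (fun k : ℕ => ↥(I ^ (k + 1)) ⊗[R] M) (tensorPowDiagram R I M)

theorem AdicCompletion.subsingleton_of_smul_top_eq_top {R N : Type*} [CommRing R] {I : Ideal R}
    [AddCommGroup N] [Module R N] (h : I • (⊤ : Submodule R N) = ⊤) :
    Subsingleton (AdicCompletion I N) := by
  have hpow (n : ℕ) : (I ^ n • ⊤ : Submodule R N) = ⊤ := by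
    induction n with
    | zero => simp
    | succ n ih => rw [pow_succ, ← smul_eq_mul, Submodule.smul_assoc, h, ih]
  have (n : ℕ) : Subsingleton (N ⧸ (I ^ n • ⊤ : Submodule R N)) :=
    Submodule.Quotient.subsingleton_iff.2 (hpow n)
  exact ⟨fun a b => AdicCompletion.ext fun n => Subsingleton.elim _ _⟩

theorem Submodule.smul_top_eq_top_of_smul_eq_self {R M : Type*} [CommRing R] [AddCommGroup M]
    [Module R M] {I : Ideal R} {N : Submodule R M} (h : I • N = N) :
    I • (⊤ : Submodule R N) = ⊤ := by
  apply Submodule.map_injective_of_injective N.injective_subtype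
  rw [Submodule.map_smul'', Submodule.map_subtype_top, h]

section Coreduced

variable {R M : Type*} [CommRing R] [AddCommGroup M] [Module R M] {I : Ideal R}

theorem smul_smul_top_eq_of_coreduced (hcor : I ^ 2 • (⊤ : Submodule R M) = I • ⊤) :
    I • (I • ⊤ : Submodule R M) = I • ⊤ := by
  rw [← Submodule.smul_assoc, smul_eq_mul, ← pow_two, hcor]

theorem pow_succ_smul_top_eq_of_coreduced (hcor : I ^ 2 • (⊤ : Submodule R M) = I • ⊤)
    (k : ℕ) : (I ^ (k + 1) • ⊤ : Submodule R M) = I • ⊤ := by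
  induction k with
  | zero => rw [zero_add, pow_one]
  | succ k ih =>
    rw [pow_succ', ← smul_eq_mul, Submodule.smul_assoc, ih, smul_smul_top_eq_of_coreduced hcor]

end Coreduced

section InvLimit

variable {R : Type u} [CommRing R] {G : ℕ → Type u} [∀ k, AddCommGroup (G k)]
  [∀ k, Module R (G k)] {f : ∀ k l : ℕ, k ≤ l → G l →ₗ[R] G k}
  {M : Type*} [AddCommGroup M] [Module R M] {ψ : ∀ k, G k →ₗ[R] M} {S : Submodule R M}

theorem invLimit_comp_apply_eq (hcomp : ∀ k l h, ψ k ∘ₗ f k l h = ψ l)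
    {x : ∀ k, G k} (hx : x ∈ invLimit R G f) (k : ℕ) : ψ k (x k) = ψ 0 (x 0) := by
  rw [← hx 0 k k.zero_le, ← LinearMap.comp_apply, hcomp]

noncomputable def invLimitEquivOfInjective (hψ : ∀ k, Function.Injective (ψ k))
    (hcomp : ∀ k l h, ψ k ∘ₗ f k l h = ψ l) (hrange : ∀ k, LinearMap.range (ψ k) = S) :
    invLimit R G f ≃ₗ[R] S :=
  LinearEquiv.ofBijective
    ((ψ 0 ∘ₗ LinearMap.proj 0 ∘ₗ (invLimit R G f).subtype).codRestrict S fun x =>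
      hrange 0 ▸ LinearMap.mem_range_self _ _) <| by
    constructor
    · intro x y hxy
      have h0 : ψ 0 (x.1 0) = ψ 0 (y.1 0) := congrArg Subtype.val hxy
      exact Subtype.ext <| funext fun k => hψ k <| by
        rw [invLimit_comp_apply_eq hcomp x.2, invLimit_comp_apply_eq hcomp y.2, h0]
    · intro m
      have hpre (k : ℕ) : ∃ g, ψ k g = m := by
        rw [← LinearMap.mem_range, hrange]
        exact m.2
      choose g hg using hpre
      refine ⟨⟨g, fun k l _ => hψ k ?_⟩, Subtype.ext (hg 0)⟩
      rw [← LinearMap.comp_apply, hcomp, hg, hg]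

end InvLimit

section DualTransform

variable {R : Type u} [CommRing R] (I : Ideal R) (M : Type u) [AddCommGroup M] [Module R M]

noncomputable def idealTensorToModule (J : Ideal R) : J ⊗[R] M →ₗ[R] M :=
  (TensorProduct.lid R M).toLinearMap ∘ₗ LinearMap.rTensor M J.subtype

theorem range_idealTensorToModule (J : Ideal R) :
    LinearMap.range (idealTensorToModule M J) = J • ⊤ := by
  rw [idealTensorToModule, LinearMap.range_comp, Submodule.map_range_rTensor_subtype_lid]

theorem injective_idealTensorToModule [Module.Flat R M] (J : Ideal R) :
    Function.Injective (idealTensorToModule M J) :=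
  (TensorProduct.lid R M).injective.comp
    (Module.Flat.rTensor_preserves_injective_linearMap _ J.injective_subtype)

theorem idealTensorToModule_comp_tensorPowDiagram (k l : ℕ) (h : k ≤ l) :
    idealTensorToModule M (I ^ (k + 1)) ∘ₗ tensorPowDiagram R I M k l h =
      idealTensorToModule M (I ^ (l + 1)) := by
  rw [idealTensorToModule, tensorPowDiagram, LinearMap.comp_assoc, ← LinearMap.rTensor_comp,
    Submodule.subtype_comp_inclusion, idealTensorToModule]

noncomputable def dualTransformEquivSmulTop [Module.Flat R M]
    (hcor : I ^ 2 • (⊤ : Submodule R M) = I • ⊤) :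
    dualTransform R I M ≃ₗ[R] (I • ⊤ : Submodule R M) :=
  invLimitEquivOfInjective (fun _ => injective_idealTensorToModule M _)
    (idealTensorToModule_comp_tensorPowDiagram I M) fun k => by
      rw [range_idealTensorToModule, pow_succ_smul_top_eq_of_coreduced hcor]

end DualTransform

theorem stmt4 (R : Type u) [CommRing R] (I : Ideal R) (M : Type u) [AddCommGroup M]
    [Module R M] (hcor : I ^ 2 • (⊤ : Submodule R M) = I • (⊤ : Submodule R M)) :
    Subsingleton (AdicCompletion I ↥(I • (⊤ : Submodule R M))) ∧
      (Module.Flat R M → Subsingleton (AdicCompletion I ↥(dualTransform R I M))) := by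
  have hIM : Subsingleton (AdicCompletion I ↥(I • (⊤ : Submodule R M))) :=
    AdicCompletion.subsingleton_of_smul_top_eq_top <|
      Submodule.smul_top_eq_top_of_smul_eq_self (smul_smul_top_eq_of_coreduced hcor)
  exact ⟨hIM, fun _ =>
    (AdicCompletion.congr I (dualTransformEquivSmulTop I M hcor)).toEquiv.subsingleton⟩
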